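/- arXiv:2510.19120 — 2 statements merged into one kernel-verified Lean document; each statement's English description precedes it below -/
import Mathlib

section
/- Let ρ,τ ∈ ℕ⁺, let G be a finite simple graph and let P = x_0–x_1–⋯–x_{τ^ρ} be a path of length τ^ρ that is a (not necessarily induced) subgraph of G. Then one of the following holds: (a) there exists i_0 ∈ {0,…,τ^ρ} such that x_{i_0} is adjacent in G to at least τ of the vertices x_i with i_0+1 ≤ i ≤ τ^ρ; or (b) there are indices j_0,j_1,…,j_ρ with 0 = j_0 < j_1 < ⋯ < j_ρ ≤ τ^ρ such that the only edges of G among the vertices {x_{j_0},x_{j_1},…,x_{j_ρ}} are x_{j_{k−1}}x_{j_k} for 1 ≤ k ≤ ρ; in other words, x_0–x_{j_1}–⋯–x_{j_ρ} is an induced path in G. -/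
/-- The induced subgraph of `G` on `S` is nonempty and connected, expressed via
walks of `G` staying inside `S`. -/
def ConnectedIn {V : Type*} (G : SimpleGraph V) (S : Set V) : Prop :=
  S.Nonempty ∧ ∀ a ∈ S, ∀ b ∈ S, ∃ w : G.Walk a b, ∀ v ∈ w.support, v ∈ S

/-- An induced `H`-model in `G`: pairwise disjoint nonempty connected branch sets,
joined by an edge iff the corresponding vertices of `H` are adjacent. -/
def IsInducedModel {W V : Type*} (H : SimpleGraph W) (G : SimpleGraph V) (X : W → Set V) : Prop :=
  (∀ w, ConnectedIn G (X w)) ∧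
  (∀ w w', w ≠ w' → Disjoint (X w) (X w')) ∧
  (∀ w w', H.Adj w w' → ∃ a ∈ X w, ∃ b ∈ X w', G.Adj a b) ∧
  (∀ w w', w ≠ w' → ¬ H.Adj w w' → ∀ a ∈ X w, ∀ b ∈ X w', ¬ G.Adj a b)

/-- `G` has an induced minor isomorphic to `H`. -/
def InducedMinor {W V : Type*} (H : SimpleGraph W) (G : SimpleGraph V) : Prop :=
  ∃ X : W → Set V, IsInducedModel H G X

/-- An `H`-model in `G` (for the minor relation). -/
def IsMinorModel {W V : Type*} (H : SimpleGraph W) (G : SimpleGraph V) (X : W → Set V) : Prop :=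
  (∀ w, ConnectedIn G (X w)) ∧
  (∀ w w', w ≠ w' → Disjoint (X w) (X w')) ∧
  (∀ w w', H.Adj w w' → ∃ a ∈ X w, ∃ b ∈ X w', G.Adj a b)

/-- `G` has a minor isomorphic to `H`. -/
def HasMinor {W V : Type*} (H : SimpleGraph W) (G : SimpleGraph V) : Prop :=
  ∃ X : W → Set V, IsMinorModel H G X

/-- `(T, β)` is a tree decomposition of `G`. -/
structure IsTreeDecomp {V ι : Type*} (G : SimpleGraph V) (T : SimpleGraph ι)
    (β : ι → Finset V) : Prop where
  tree : T.IsTree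
  bags_connected : ∀ v : V, ConnectedIn T {i | v ∈ β i}
  edges_covered : ∀ u v : V, G.Adj u v → ∃ i, u ∈ β i ∧ v ∈ β i

/-- `G` has a tree decomposition of width at most `w`. -/
def TreewidthLE {V : Type*} (G : SimpleGraph V) (w : ℕ) : Prop :=
  ∃ (n : ℕ) (T : SimpleGraph (Fin n)) (β : Fin n → Finset V),
    IsTreeDecomp G T β ∧ ∀ i, (β i).card ≤ w + 1

noncomputable def treewidth {V : Type*} (G : SimpleGraph V) : ℕ :=
  sInf {w | TreewidthLE G w}

/-- `G` has a path decomposition of width at most `w`. -/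
def PathwidthLE {V : Type*} (G : SimpleGraph V) (w : ℕ) : Prop :=
  ∃ (n : ℕ) (β : Fin n → Finset V),
    IsTreeDecomp G (SimpleGraph.pathGraph n) β ∧ ∀ i, (β i).card ≤ w + 1

noncomputable def pathwidth {V : Type*} (G : SimpleGraph V) : ℕ :=
  sInf {w | PathwidthLE G w}

/-- A hereditary class of finite graphs (each finite graph is represented, up to
isomorphism, on some `Fin n`): the class is closed under induced subgraphs,
i.e. under pulling back along injections. -/
def Hereditary (𝒢 : ∀ n : ℕ, SimpleGraph (Fin n) → Prop) : Prop :=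
  ∀ (n m : ℕ) (G : SimpleGraph (Fin n)) (f : Fin m ↪ Fin n),
    𝒢 n G → 𝒢 m (G.comap ⇑f)

/-- A graph `J` is `ζ`-jagged if every induced subgraph with pathwidth at least 3
has at least `ζ` vertices of degree two (in that induced subgraph). -/
def Jagged {V : Type*} (ζ : ℕ) (J : SimpleGraph V) : Prop :=
  ∀ s : Set V, 3 ≤ pathwidth (J.induce s) →
    ζ ≤ {v | v ∈ s ∧ ({w | w ∈ s ∧ J.Adj v w}).ncard = 2}.ncard

/-- A graph is `d`-degenerate if every nonempty induced subgraph has a vertex of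
degree at most `d`. -/
def Degenerate {V : Type*} (d : ℕ) (G : SimpleGraph V) : Prop :=
  ∀ s : Set V, s.Nonempty → ∃ v ∈ s, ({w | w ∈ s ∧ G.Adj v w}).ncard ≤ d

/-- The complete binary tree of radius `ρ`: vertices are binary strings of length
at most `ρ`, and `x` is adjacent to `b :: x` (its children). -/
def binTree (ρ : ℕ) : SimpleGraph {l : List Bool // l.length ≤ ρ} where
  Adj x y := (∃ b : Bool, (x : List Bool) = b :: (y : List Bool)) ∨
             (∃ b : Bool, (y : List Bool) = b :: (x : List Bool))
  symm := by constructor; rintro x y (h | h); exact Or.inr h; exact Or.inl h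
  loopless := by
    constructor; rintro x (⟨b, hb⟩ | ⟨b, hb⟩) <;>
      · have := congrArg List.length hb
        simp at this

/-- The `n × n` square grid graph. -/
def gridGraph (n : ℕ) : SimpleGraph (Fin n × Fin n) where
  Adj p q := (p.1 = q.1 ∧ ((p.2 : ℕ) + 1 = (q.2 : ℕ) ∨ (q.2 : ℕ) + 1 = (p.2 : ℕ))) ∨
             (p.2 = q.2 ∧ ((p.1 : ℕ) + 1 = (q.1 : ℕ) ∨ (q.1 : ℕ) + 1 = (p.1 : ℕ)))
  symm := by
    constructor; rintro p q (⟨h1, h2⟩ | ⟨h1, h2⟩)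
    · exact Or.inl ⟨h1.symm, h2.symm⟩
    · exact Or.inr ⟨h1.symm, h2.symm⟩
  loopless := by constructor; rintro p (⟨_, h | h⟩ | ⟨_, h | h⟩) <;> omega

/-- A graph is planar iff it is isomorphic to a minor of some square grid. -/
def IsPlanar {W : Type*} (H : SimpleGraph W) : Prop :=
  ∃ n : ℕ, HasMinor H (gridGraph n)

/-- `S` is the vertex set of an induced path in `G` from `x` to `y`. -/
def IsInducedPathSet {V : Type*} (G : SimpleGraph V) (S : Set V) (x y : V) : Prop :=
  ∃ p : G.Walk x y, p.IsPath ∧ {v | v ∈ p.support} = S ∧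
    ∀ u v : V, u ∈ p.support → v ∈ p.support → G.Adj u v → p.toSubgraph.Adj u v

/-- `G` has a stable strong `(κ, lam)`-block: a stable set `B` of at least `κ`
vertices together with, for each unordered pair of distinct vertices of `B`,
at least `lam` pairwise internally disjoint induced paths joining them, such that
path systems of distinct pairs meet exactly in the shared endpoints. -/
def HasStableStrongBlock {V : Type*} (G : SimpleGraph V) (κ lam : ℕ) : Prop :=
  ∃ (B : Set V) (P : V → V → Fin lam → Set V),
    κ ≤ B.ncard ∧
    (∀ x ∈ B, ∀ y ∈ B, x ≠ y → ¬ G.Adj x y) ∧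
    (∀ x ∈ B, ∀ y ∈ B, x ≠ y →
      (∀ i, IsInducedPathSet G (P x y i) x y) ∧
      (∀ i j, i ≠ j → ∀ v, v ∈ P x y i → v ∈ P x y j → v = x ∨ v = y) ∧
      (∀ i, P x y i = P y x i)) ∧
    (∀ x ∈ B, ∀ y ∈ B, ∀ x' ∈ B, ∀ y' ∈ B, x ≠ y → x' ≠ y' →
      ({x, y} : Set V) ≠ {x', y'} →
      (⋃ i, P x y i) ∩ (⋃ i, P x' y' i) = (({x, y} : Set V) ∩ {x', y'}))

/-- `G` is `(κ, lam)`-separable: there is no stable strong `(κ, lam)`-block in `G`. -/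
def Separable {V : Type*} (G : SimpleGraph V) (κ lam : ℕ) : Prop :=
  ¬ HasStableStrongBlock G κ lam

/-- In the tree `T` rooted at `u`, `w` is a child of `v`. -/
def IsChild {α : Type*} (T : SimpleGraph α) (u v w : α) : Prop :=
  T.Adj v w ∧ T.dist u w = T.dist u v + 1

/-- `(T, u)` is a `(δ, ρ)`-regular rooted tree: `T` is a tree, every vertex is at
distance at most `ρ` from `u`, and every vertex at distance less than `ρ` from `u`
has exactly `δ` children. -/
def RootedRegular {α : Type*} (T : SimpleGraph α) (u : α) (δ ρ : ℕ) : Prop :=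
  T.IsTree ∧ (∀ v, T.dist u v ≤ ρ) ∧
    ∀ v, T.dist u v < ρ → {w | IsChild T u v w}.ncard = δ

/-- The rooted tree induced by `T` on `s`, with root `r`, is a rooted subtree of
`(T, u)`: it is a tree and every child relation in it is a child relation in `(T, u)`. -/
def IsRootedSubtree {α : Type*} (T : SimpleGraph α) (u : α) (s : Set α) (r : ↥s) : Prop :=
  (T.induce s).IsTree ∧
    ∀ v w : ↥s, IsChild (T.induce s) r v w → IsChild T u (↑v) (↑w)

open Classical in
/-- The `i`-ancestor of `v` in the tree `T` rooted at `u`: the vertex on the unique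
`u`–`v` path at distance `i` from `v`. -/
noncomputable def ancestor {α : Type*} (T : SimpleGraph α) (u v : α) (i : ℕ) : α :=
  if h : ∃ w, T.dist u w + i = T.dist u v ∧ T.dist w v = i then h.choose else v

/-- The rooted tree `T` (mapped into `G` by `f`) is path-uniform in `G`. -/
def PathUniform {V β : Type*} (G : SimpleGraph V) (f : β → V) (T : SimpleGraph β)
    (r : β) (ρ : ℕ) : Prop :=
  ∀ v v' : β, T.dist r v = ρ → T.dist r v' = ρ → ∀ i j : ℕ, i ≤ ρ → j ≤ ρ →
    (G.Adj (f (ancestor T r v i)) (f (ancestor T r v j)) ↔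
      G.Adj (f (ancestor T r v' i)) (f (ancestor T r v' j)))

/-- The rooted tree `T` (mapped into `G` by `f`) is path-induced in `G`. -/
def PathInduced {V β : Type*} (G : SimpleGraph V) (f : β → V) (T : SimpleGraph β)
    (r : β) (ρ : ℕ) : Prop :=
  ∀ v : β, T.dist r v = ρ → ∀ i j : ℕ, i ≤ ρ → j ≤ ρ →
    (G.Adj (f (ancestor T r v i)) (f (ancestor T r v j)) ↔ (i + 1 = j ∨ j + 1 = i))

/-- The rooted tree `T` (mapped into `G` by `f`) is branch-induced in `G`: every
`G`-edge between vertices of `T` that is not a `T`-edge joins a vertex to one of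
its ancestors. -/
def BranchInduced {V β : Type*} (G : SimpleGraph V) (f : β → V) (T : SimpleGraph β)
    (r : β) : Prop :=
  ∀ v w : β, G.Adj (f v) (f w) → ¬ T.Adj v w →
    (T.dist r v + T.dist v w = T.dist r w ∨ T.dist r w + T.dist w v = T.dist r v)

/-- `G` has a (not necessarily induced) subgraph isomorphic to `H`. -/
def HasSubgraphIso {W V : Type*} (H : SimpleGraph W) (G : SimpleGraph V) : Prop :=
  ∃ f : W → V, Function.Injective f ∧ ∀ a b, H.Adj a b → G.Adj (f a) (f b)

/-- The spanning subgraph of `G` consisting of the edges of color `i` under the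
edge-coloring `F`. -/
def colorSub {V : Type*} {c : ℕ} (G : SimpleGraph V) (F : V → V → Fin c) (i : Fin c) :
    SimpleGraph V where
  Adj u v := G.Adj u v ∧ F u v = i ∧ F v u = i
  symm := by constructor; rintro u v ⟨h1, h2, h3⟩; exact ⟨h1.symm, h3, h2⟩
  loopless := by constructor; rintro u ⟨h, _, _⟩; exact G.loopless.irrefl u h

/-- Distance from `a` to `b` within the induced subgraph `G[S]` (via walks of `G`
all of whose vertices lie in `S`). -/
noncomputable def distIn {V : Type*} (G : SimpleGraph V) (S : Set V) (a b : V) : ℕ :=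
  sInf {n | ∃ w : G.Walk a b, w.length = n ∧ ∀ v ∈ w.support, v ∈ S}

/-- `(a 0, …, a (σ+1))` is a `(σ, θ)`-`X`-abyss in `G`. -/
def IsAbyss {V : Type*} (G : SimpleGraph V) (X : Set V) (σ θ : ℕ) (a : ℕ → V) : Prop :=
  ∃ (S : ℕ → Set V) (ρ : ℕ → ℕ),
    S 0 ⊆ X ∧ ConnectedIn G (S 0) ∧ (∀ k ≤ σ + 1, a k ∈ S 0) ∧
    (∀ i < σ,
      S (i + 1) ⊆ {v | v ∈ S i ∧ distIn G (S i) (a i) v = ρ i + 1} ∧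
      ConnectedIn G (S (i + 1)) ∧
      ∀ k, i + 1 ≤ k → k ≤ σ + 1 → a k ∈ S (i + 1)) ∧
    θ ≤ G.dist (a σ) (a (σ + 1))

/-- The torso of a tree decomposition `(T, β)` of `G` at the node `x`. -/
def torso {V ι : Type*} (G : SimpleGraph V) (T : SimpleGraph ι) (β : ι → Finset V)
    (x : ι) : SimpleGraph {v : V // v ∈ β x} where
  Adj u v := u ≠ v ∧ (G.Adj ↑u ↑v ∨ ∃ y, T.Adj x y ∧ ↑u ∈ β y ∧ ↑v ∈ β y)
  symm := by
    constructor; rintro u v ⟨hne, h | ⟨y, hy, h1, h2⟩⟩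
    · exact ⟨hne.symm, Or.inl h.symm⟩
    · exact ⟨hne.symm, Or.inr ⟨y, hy, h2, h1⟩⟩
  loopless := by constructor; rintro u ⟨hne, _⟩; exact hne rfl

/-- The vertex set of the component of `T - x` containing `y` (denoted `T_{y∖x}`). -/
def compAway {ι : Type*} (T : SimpleGraph ι) (y x : ι) : Set ι :=
  {z | ∃ w : T.Walk y z, x ∉ w.support}

/-- A tree decomposition `(T, β)` of `G` is tight. -/
def Tight {V ι : Type*} (G : SimpleGraph V) (T : SimpleGraph ι) (β : ι → Finset V) : Prop :=
  ∀ x y, T.Adj x y →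
    ∃ v₀ ∈ (⋃ z ∈ compAway T y x, (β z : Set V)) \ (⋃ z ∈ compAway T x y, (β z : Set V)),
      ∀ u : V, u ∈ β x → u ∈ β y →
        ∃ c : V, G.Adj u c ∧ ∃ w : G.Walk v₀ c, ∀ p ∈ w.support,
          p ∈ (⋃ z ∈ compAway T y x, (β z : Set V)) \ (⋃ z ∈ compAway T x y, (β z : Set V))

/-- `G` has a subgraph isomorphic to some subdivision of the complete graph `K_μ`:
equivalently, there are `μ` branch vertices joined by pairwise internally disjoint
paths of nonzero length. -/
def HasKSubdivision {V : Type*} (μ : ℕ) (G : SimpleGraph V) : Prop :=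
  ∃ b : Fin μ → V, Function.Injective b ∧
    ∃ P : ∀ i j : Fin μ, i < j → G.Walk (b i) (b j),
      (∀ i j (h : i < j), (P i j h).IsPath) ∧
      (∀ i j (h : i < j), ∀ m : Fin μ, b m ∈ (P i j h).support → m = i ∨ m = j) ∧
      (∀ i j (h : i < j), ∀ k l (h' : k < l), (i, j) ≠ (k, l) →
        ∀ v : V, v ∈ (P i j h).support → v ∈ (P k l h').support →
          (v = b i ∨ v = b j) ∧ (v = b k ∨ v = b l))

/-!
Orient every edge `x_i x_j` of `G` with `i < j` and let `d(i)` be the length of a shortest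
ascending walk `x_0 → ⋯ → x_i`. A vertex at level `t + 1` is a forward neighbour of one at
level `t`, so if no vertex has `τ` forward neighbours, level `t` has at most `(τ - 1) ^ t`
vertices; as `∑_{t < ρ} (τ - 1) ^ t ≤ τ ^ ρ`, some vertex of the path has `d ≥ ρ`. The first
`ρ + 1` vertices of a shortest ascending walk to it form an induced path, because a chord
`x_{c k} x_{c l}` with `k + 1 < l` would shortcut the walk.
-/

open Finset

section ForwardWalk

variable {V : Type*} (G : SimpleGraph V) (x : ℕ → V)

def IsForwardWalk (c : ℕ → ℕ) (n : ℕ) : Prop :=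
  c 0 = 0 ∧ ∀ t < n, c t < c (t + 1) ∧ G.Adj (x (c t)) (x (c (t + 1)))

noncomputable def forwardDist (i : ℕ) : ℕ :=
  sInf {n | ∃ c, IsForwardWalk G x c n ∧ c n = i}

variable {G x} {c : ℕ → ℕ} {n : ℕ}

lemma isForwardWalk_id {N : ℕ} (hadj : ∀ i < N, G.Adj (x i) (x (i + 1))) {i : ℕ}
    (hi : i ≤ N) : IsForwardWalk G x id i :=
  ⟨rfl, fun t ht => ⟨t.lt_succ_self, hadj t (by omega)⟩⟩

namespace IsForwardWalk

lemma mono (h : IsForwardWalk G x c n) {k : ℕ} (hk : k ≤ n) : IsForwardWalk G x c k :=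
  ⟨h.1, fun t ht => h.2 t (by omega)⟩

lemma strictMonoOn (h : IsForwardWalk G x c n) : StrictMonoOn c (Set.Iic n) :=
  strictMonoOn_Iic_of_lt_succ fun t ht => (h.2 t ht).1

lemma forwardDist_le (h : IsForwardWalk G x c n) : forwardDist G x (c n) ≤ n :=
  Nat.sInf_le ⟨c, h, rfl⟩

lemma exists_forwardDist (h : IsForwardWalk G x c n) :
    ∃ c', IsForwardWalk G x c' (forwardDist G x (c n)) ∧ c' (forwardDist G x (c n)) = c n :=
  Nat.sInf_mem (s := {m | ∃ c', IsForwardWalk G x c' m ∧ c' m = c n}) ⟨n, c, h, rfl⟩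

lemma snoc (h : IsForwardWalk G x c n) {j : ℕ} (hlt : c n < j) (hadj : G.Adj (x (c n)) (x j)) :
    IsForwardWalk G x (Function.update c (n + 1) j) (n + 1) := by
  refine ⟨by simpa [Function.update_apply] using h.1, fun t ht => ?_⟩
  rcases Nat.lt_succ_iff_lt_or_eq.1 ht with ht | rfl
  · simpa [Function.update_apply, show t ≠ n + 1 by omega, show t ≠ n by omega] using h.2 t ht
  · simpa [Function.update_apply] using And.intro hlt hadj

lemma forwardDist_le_succ (h : IsForwardWalk G x c n) {j : ℕ} (hlt : c n < j)
    (hadj : G.Adj (x (c n)) (x j)) : forwardDist G x j ≤ forwardDist G x (c n) + 1 := by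
  obtain ⟨c', hc', hend⟩ := h.exists_forwardDist
  rw [← hend] at hlt hadj
  simpa using (hc'.snoc hlt hadj).forwardDist_le

lemma forwardDist_apply (h : IsForwardWalk G x c n) (hopt : forwardDist G x (c n) = n)
    {k : ℕ} (hk : k ≤ n) : forwardDist G x (c k) = k := by
  have hgrowth :
      ∀ l, k ≤ l → l ≤ n → forwardDist G x (c l) ≤ forwardDist G x (c k) + (l - k) := by
    intro l hkl
    induction l, hkl using Nat.le_induction with
    | base => simp
    | succ l hkl ih =>
      intro hl
      have := (h.mono (by omega)).forwardDist_le_succ (h.2 l (by omega)).1 (h.2 l (by omega)).2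
      have := ih (by omega)
      omega
  have := hgrowth n hk le_rfl
  have := (h.mono hk).forwardDist_le
  omega

lemma adj_iff (h : IsForwardWalk G x c n) (hopt : forwardDist G x (c n) = n) {k l : ℕ}
    (hk : k ≤ n) (hl : l ≤ n) : G.Adj (x (c k)) (x (c l)) ↔ k + 1 = l ∨ l + 1 = k := by
  have hchord : ∀ {k l}, k < l → l ≤ n → G.Adj (x (c k)) (x (c l)) → l ≤ k + 1 :=
    fun {k l} hkl hl hadj => by
      have hk : k ≤ n := hkl.le.trans hl
      have := (h.mono hk).forwardDist_le_succ (h.strictMonoOn hk hl hkl) hadj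
      rwa [h.forwardDist_apply hopt hl, h.forwardDist_apply hopt hk] at this
  constructor
  · intro hadj
    rcases lt_trichotomy k l with hkl | rfl | hlk
    · have := hchord hkl hl hadj; omega
    · exact absurd hadj (G.loopless.irrefl _)
    · have := hchord hlk hk hadj.symm; omega
  · rintro (rfl | rfl)
    · exact (h.2 k (by omega)).2
    · exact (h.2 l (by omega)).2.symm

lemma eq_zero_of_forwardDist_eq_zero (h : IsForwardWalk G x c n)
    (h0 : forwardDist G x (c n) = 0) : c n = 0 := by
  obtain ⟨c', hc', hend⟩ := h.exists_forwardDist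
  rw [h0] at hend
  exact hend ▸ hc'.1

lemma exists_pred_of_forwardDist_eq_succ (h : IsForwardWalk G x c n) {t : ℕ}
    (ht : forwardDist G x (c n) = t + 1) :
    ∃ j < c n, G.Adj (x j) (x (c n)) ∧ forwardDist G x j = t := by
  obtain ⟨c', hc', hend⟩ := h.exists_forwardDist
  rw [ht] at hc' hend
  refine ⟨c' t, hend ▸ (hc'.2 t t.lt_succ_self).1, hend ▸ (hc'.2 t t.lt_succ_self).2, ?_⟩
  exact hc'.forwardDist_apply (hend ▸ ht) (by omega)

end IsForwardWalk

variable [DecidableRel G.Adj]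

lemma card_filter_forwardDist_eq_le {N d : ℕ} (hadj : ∀ i < N, G.Adj (x i) (x (i + 1)))
    (hdeg : ∀ i ≤ N, #{j ∈ Ioc i N | G.Adj (x i) (x j)} ≤ d) (t : ℕ) :
    #{i ∈ range (N + 1) | forwardDist G x i = t} ≤ d ^ t := by
  induction t with
  | zero =>
    have hsub : {i ∈ range (N + 1) | forwardDist G x i = 0} ⊆ {0} := fun i hi => by
      simp only [mem_filter, mem_range] at hi
      simpa using (isForwardWalk_id hadj (by omega : i ≤ N)).eq_zero_of_forwardDist_eq_zero hi.2
    simpa using card_le_card hsub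
  | succ t ih =>
    have hsub : {i ∈ range (N + 1) | forwardDist G x i = t + 1} ⊆
        {j ∈ range (N + 1) | forwardDist G x j = t}.biUnion
          (fun j => {i ∈ Ioc j N | G.Adj (x j) (x i)}) := fun i hi => by
      simp only [mem_filter, mem_range] at hi
      obtain ⟨j, hji, hadj', hj⟩ :=
        (isForwardWalk_id hadj (by omega : i ≤ N)).exists_pred_of_forwardDist_eq_succ hi.2
      simp only [mem_biUnion, mem_filter, mem_range, mem_Ioc]
      exact ⟨j, ⟨by simp only [id] at hji; omega, hj⟩, ⟨hji, by omega⟩, hadj'⟩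
    calc _ ≤ _ := card_le_card hsub
      _ ≤ _ * d := card_biUnion_le_card_mul _ _ _ fun j hj =>
          hdeg j (by simp only [mem_filter, mem_range] at hj; omega)
      _ ≤ d ^ t * d := Nat.mul_le_mul_right _ ih
      _ = d ^ (t + 1) := (pow_succ _ _).symm

lemma exists_le_forwardDist {N d ρ : ℕ} (hadj : ∀ i < N, G.Adj (x i) (x (i + 1)))
    (hdeg : ∀ i ≤ N, #{j ∈ Ioc i N | G.Adj (x i) (x j)} ≤ d)
    (hN : ∑ t ∈ range ρ, d ^ t ≤ N) : ∃ i ≤ N, ρ ≤ forwardDist G x i := by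
  by_contra! hsmall
  have hcover : range (N + 1) ⊆
      (range ρ).biUnion (fun t => {i ∈ range (N + 1) | forwardDist G x i = t}) := fun i hi => by
    have := hsmall i (by simpa [Nat.lt_succ_iff] using hi)
    simp only [mem_biUnion, mem_filter, mem_range]
    exact ⟨_, this, by simpa using hi, rfl⟩
  have := calc N + 1 = #(range (N + 1)) := (card_range _).symm
    _ ≤ _ := card_le_card hcover
    _ ≤ _ := card_biUnion_le
    _ ≤ ∑ t ∈ range ρ, d ^ t := sum_le_sum fun t _ => card_filter_forwardDist_eq_le hadj hdeg t
  omega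

end ForwardWalk

lemma sum_range_pow_le_succ_pow (a n : ℕ) : ∑ t ∈ range n, a ^ t ≤ (a + 1) ^ n :=
  calc ∑ t ∈ range n, a ^ t ≤ ∑ t ∈ range (n + 1), a ^ t :=
        sum_le_sum_of_subset (range_subset_range.2 n.le_succ)
    _ ≤ ∑ t ∈ range (n + 1), a ^ t * 1 ^ (n - t) * n.choose t :=
        sum_le_sum fun t ht => by
          have := Nat.choose_pos (Nat.lt_succ_iff.1 (mem_range.1 ht))
          simpa using Nat.le_mul_of_pos_right _ this
    _ = (a + 1) ^ n := (add_pow _ _ _).symm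

theorem statement9_general {V : Type} (ρ τ : ℕ)
    (G : SimpleGraph V) (x : ℕ → V)
    (hadj : ∀ i, i < τ ^ ρ → G.Adj (x i) (x (i + 1))) :
    (∃ i₀ ≤ τ ^ ρ, τ ≤ {i : ℕ | i₀ + 1 ≤ i ∧ i ≤ τ ^ ρ ∧ G.Adj (x i₀) (x i)}.ncard) ∨
    (∃ j : ℕ → ℕ, j 0 = 0 ∧ (∀ k < ρ, j k < j (k + 1)) ∧ j ρ ≤ τ ^ ρ ∧
      ∀ k l, k ≤ ρ → l ≤ ρ →
        (G.Adj (x (j k)) (x (j l)) ↔ (k + 1 = l ∨ l + 1 = k))) := by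
  classical
  refine or_iff_not_imp_left.2 fun hfew => ?_
  push Not at hfew
  have hdeg : ∀ i ≤ τ ^ ρ, #{j ∈ Ioc i (τ ^ ρ) | G.Adj (x i) (x j)} ≤ τ - 1 := fun i hi => by
    have := hfew i hi
    rw [← Set.ncard_coe_finset]
    convert Nat.le_sub_one_of_lt this using 2
    ext j; simp [and_assoc]
  have hτ : 1 ≤ τ := by have := hfew 0 (Nat.zero_le _); omega
  obtain ⟨i, hi, hρi⟩ := exists_le_forwardDist hadj hdeg
    (by simpa [Nat.sub_add_cancel hτ] using sum_range_pow_le_succ_pow (τ - 1) ρ)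
  obtain ⟨c, hc, hend⟩ :
      ∃ c, IsForwardWalk G x c (forwardDist G x i) ∧ c (forwardDist G x i) = i :=
    (isForwardWalk_id hadj hi).exists_forwardDist
  have hopt : forwardDist G x (c (forwardDist G x i)) = forwardDist G x i := by rw [hend]
  refine ⟨c, hc.1, fun k hk => (hc.2 k (by omega)).1, ?_,
    fun k l hk hl => hc.adj_iff hopt (by omega) (by omega)⟩
  calc c ρ ≤ c (forwardDist G x i) := hc.strictMonoOn.monotoneOn hρi (Set.mem_Iic.2 le_rfl) hρi
    _ = i := hend
    _ ≤ τ ^ ρ := hi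

/-- Along a path `x_0 – ⋯ – x_{τ^ρ}` (a not necessarily induced subgraph of
`G`), either some `x_{i₀}` has at least `τ` neighbors among the later vertices, or there
are indices `0 = j_0 < j_1 < ⋯ < j_ρ` such that `x_{j_0} – x_{j_1} – ⋯ – x_{j_ρ}`
is an induced path in `G`. -/
theorem statement9 {V : Type} [Fintype V] (ρ τ : ℕ) (hρ : 1 ≤ ρ) (hτ : 1 ≤ τ)
    (G : SimpleGraph V) (x : ℕ → V)
    (hinj : ∀ i j, i ≤ τ ^ ρ → j ≤ τ ^ ρ → x i = x j → i = j)
    (hadj : ∀ i, i < τ ^ ρ → G.Adj (x i) (x (i + 1))) :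
    (∃ i₀ ≤ τ ^ ρ, τ ≤ {i : ℕ | i₀ + 1 ≤ i ∧ i ≤ τ ^ ρ ∧ G.Adj (x i₀) (x i)}.ncard) ∨
    (∃ j : ℕ → ℕ, j 0 = 0 ∧ (∀ k < ρ, j k < j (k + 1)) ∧ j ρ ≤ τ ^ ρ ∧
      ∀ k l, k ≤ ρ → l ≤ ρ →
        (G.Adj (x (j k)) (x (j l)) ↔ (k + 1 = l ∨ l + 1 = k))) :=
  statement9_general ρ τ G x hadj
end

section
/- Let δ,τ ∈ ℕ⁺ and ρ ∈ ℕ∪{0}. Let G be a finite simple graph with no minor isomorphic to K_{τ+1}, and let (T,u) be a (Δ,ρ)-regular rooted tree, for some Δ ∈ ℕ⁺ with Δ ≥ τ^{δ−1}, such that T is a subgraph of G. Then some (δ,ρ)-regular rooted subtree (T',u) of (T,u) is branch-induced in G. -/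
/-!
At a vertex `v` of depth less than `ρ`, call two children of `v` *touching* when some descendant
of one is `G`-adjacent to some descendant of the other. A set of `τ` pairwise touching children,
together with `{v}`, gives the branch sets of a `K_{τ+1}`-model; so the touching graph on the
`Δ ≥ τ ^ (δ - 1)` children of `v` has no `τ`-clique, and a Ramsey argument (fix a vertex and
recurse into its neighbours or into its non-neighbours) yields `δ` pairwise non-touching children.
Choose such children at every vertex and keep the vertices all of whose ancestors were chosen.
This is a `(δ, ρ)`-regular rooted subtree, and it is branch-induced: two incomparable `G`-adjacent
vertices of it would lie below two distinct chosen children of their deepest common ancestor, and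
these children would touch.
-/

open SimpleGraph Finset

theorem SimpleGraph.exists_isNIndepSet_of_cliqueFreeOn {V : Type*} (H : SimpleGraph V)
    {δ τ : ℕ} {A : Finset V} (hA : H.CliqueFreeOn A τ) (hcard : τ ^ (δ - 1) ≤ #A) :
    ∃ B ⊆ A, H.IsNIndepSet δ B := by
  classical
  induction δ generalizing τ A with
  | zero => exact ⟨∅, empty_subset _, by simp [← isNClique_compl]⟩
  | succ δ ihδ =>
  induction τ generalizing A with
  | zero => exact absurd (isNClique_empty.2 rfl) (hA (by simp))
  | succ τ ihτ =>
  obtain ⟨x, hx⟩ : A.Nonempty := card_pos.1 (lt_of_lt_of_le (by positivity) hcard)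
  rcases δ with _ | δ
  · exact ⟨{x}, by simpa, by simp [← isNClique_compl]⟩
  set N := (A.erase x).filter (H.Adj x)
  set M := (A.erase x).filter (fun y => ¬ H.Adj x y)
  have hNA : N ⊆ A := (filter_subset _ _).trans (erase_subset _ _)
  have hMA : M ⊆ A := (filter_subset _ _).trans (erase_subset _ _)
  have hNM : #N + #M + 1 = #A := by
    rw [card_filter_add_card_filter_not, card_erase_add_one hx]
  by_cases hN : τ ^ (δ + 1) ≤ #N
  · have hNfree : H.CliqueFreeOn N τ := fun t ht hclique => by
      refine hA (t := insert x t) ?_ (hclique.insert fun b hb => (mem_filter.1 (ht hb)).2)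
      simpa [Set.insert_subset_iff, hx] using ht.trans (coe_subset.2 hNA)
    obtain ⟨B, hBN, hB⟩ := ihτ hNfree hN
    exact ⟨B, hBN.trans hNA, hB⟩
  · have hpow : τ ^ (δ + 1) + (τ + 1) ^ δ ≤ (τ + 1) ^ (δ + 1) := by
      have := Nat.pow_le_pow_left (Nat.le_succ τ) δ
      rw [pow_succ, pow_succ]
      nlinarith
    have hMfree : H.CliqueFreeOn M (τ + 1) := fun t ht => hA (ht.trans (coe_subset.2 hMA))
    obtain ⟨B, hBM, hB⟩ := ihδ hMfree (by simp only [Nat.add_sub_cancel] at hcard ⊢; omega)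
    refine ⟨insert x B, insert_subset hx (hBM.trans hMA), ?_⟩
    rw [← isNClique_compl] at hB ⊢
    refine hB.insert fun b hb => ?_
    obtain ⟨hb, hxb⟩ := mem_filter.1 (hBM hb)
    exact (compl_adj H x b).2 ⟨(ne_of_mem_erase hb).symm, hxb⟩

theorem IsMinorModel.hasMinor_completeGraph_fin {ι V : Type*} [Fintype ι] {G : SimpleGraph V}
    {X : ι → Set V} (h : IsMinorModel (completeGraph ι) G X) :
    HasMinor (completeGraph (Fin (Fintype.card ι))) G := by
  obtain ⟨hconn, hdisj, hadj⟩ := h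
  have he := (Fintype.equivFin ι).symm.injective
  exact ⟨X ∘ (Fintype.equivFin ι).symm, fun i => hconn _, fun i j hij => hdisj _ _ (he.ne hij),
    fun i j hij => hadj _ _ (he.ne hij)⟩

section ConnectedIn

variable {V : Type*} {G G' : SimpleGraph V} {S : Set V}

theorem connectedIn_of_forall_walk {c : V} (hc : c ∈ S)
    (h : ∀ a ∈ S, ∃ p : G.Walk c a, ∀ x ∈ p.support, x ∈ S) : ConnectedIn G S := by
  refine ⟨⟨c, hc⟩, fun a ha b hb => ?_⟩
  obtain ⟨p, hp⟩ := h a ha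
  obtain ⟨q, hq⟩ := h b hb
  refine ⟨p.reverse.append q, fun x hx => ?_⟩
  rw [Walk.mem_support_append_iff, Walk.support_reverse, List.mem_reverse] at hx
  exact hx.elim (hp x) (hq x)

theorem connectedIn_singleton (v : V) : ConnectedIn G {v} :=
  connectedIn_of_forall_walk rfl fun _ ha => ha ▸ ⟨.nil, by simp⟩

theorem ConnectedIn.mono (h : G ≤ G') (hS : ConnectedIn G S) : ConnectedIn G' S := by
  refine ⟨hS.1, fun a ha b hb => ?_⟩
  obtain ⟨p, hp⟩ := hS.2 a ha b hb
  exact ⟨p.mapLe h, by rwa [Walk.support_mapLe_eq_support]⟩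

end ConnectedIn

theorem SimpleGraph.Walk.dist_add_dist_of_mem_support {V : Type*} {G : SimpleGraph V}
    {a b x : V} (p : G.Walk a b) (hp : p.length = G.dist a b) (hx : x ∈ p.support) :
    G.dist a x + G.dist x b = G.dist a b := by
  classical
  rw [← length_eq_dist_of_subwalk hp (p.isSubwalk_takeUntil hx),
    ← length_eq_dist_of_subwalk hp (p.isSubwalk_dropUntil hx), ← hp, ← length_append,
    take_spec]

section Ancestors

variable {α : Type*} {T : SimpleGraph α} {u a b c w x z : α}

/-- `a` lies on a geodesic from `u` to `b`; in a tree this says that `a` is an ancestor of `b`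
in `(T, u)`. -/
def IsAncestor (T : SimpleGraph α) (u a b : α) : Prop :=
  T.dist u a + T.dist a b = T.dist u b

def descendants (T : SimpleGraph α) (u a : α) : Set α :=
  {b | IsAncestor T u a b}

def IsAncestorClosed (T : SimpleGraph α) (u : α) (s : Set α) : Prop :=
  ∀ w ∈ s, ∀ x, IsAncestor T u x w → x ∈ s

theorem IsAncestor.refl (T : SimpleGraph α) (u a : α) : IsAncestor T u a a := by
  simp [IsAncestor]

theorem isAncestor_root (T : SimpleGraph α) (u b : α) : IsAncestor T u u b := by
  simp [IsAncestor]

theorem IsAncestor.dist_le (h : IsAncestor T u a b) : T.dist u a ≤ T.dist u b :=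
  h ▸ Nat.le_add_right _ _

theorem IsChild.isAncestor (h : IsChild T u a b) : IsAncestor T u a b := by
  have := h.2
  rw [IsAncestor, dist_eq_one_iff_adj.2 h.1]
  omega

theorem IsAncestor.trans (hT : T.Connected) (hab : IsAncestor T u a b)
    (hbc : IsAncestor T u b c) : IsAncestor T u a c := by
  have := hT.dist_triangle (u := a) (v := b) (w := c)
  have := hT.dist_triangle (u := u) (v := a) (w := c)
  unfold IsAncestor at *
  omega

theorem IsAncestor.antisymm (hT : T.Connected) (hab : IsAncestor T u a b)
    (hba : IsAncestor T u b a) : a = b := by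
  have := dist_comm (G := T) (u := a) (v := b)
  unfold IsAncestor at *
  exact hT.dist_eq_zero_iff.1 (by omega)

theorem IsAncestor.of_mem_support (hT : T.Connected) (hab : IsAncestor T u a b)
    {p : T.Walk a b} (hp : p.length = T.dist a b) (hx : x ∈ p.support) :
    IsAncestor T u a x ∧ IsAncestor T u x b := by
  have := p.dist_add_dist_of_mem_support hp hx
  have := hT.dist_triangle (u := u) (v := a) (w := x)
  have := hT.dist_triangle (u := u) (v := x) (w := b)
  unfold IsAncestor at *
  omega

theorem IsAncestor.exists_isChild (hT : T.Connected) (h : IsAncestor T u a x) (hne : a ≠ x) :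
    ∃ c, IsChild T u a c ∧ IsAncestor T u c x := by
  obtain ⟨p, hp⟩ := hT.exists_walk_length_eq_dist a x
  cases p with
  | nil => exact absurd rfl hne
  | @cons _ c _ hac q =>
    have := SimpleGraph.dist_le q
    have := hT.dist_triangle (u := u) (v := c) (w := x)
    have := hT.dist_triangle (u := u) (v := a) (w := c)
    rw [Walk.length_cons] at hp
    rw [dist_eq_one_iff_adj.2 hac] at *
    exact ⟨c, ⟨hac, by unfold IsAncestor at h; omega⟩, by unfold IsAncestor at *; omega⟩

theorem connectedIn_descendants (hT : T.Connected) (a : α) : ConnectedIn T (descendants T u a) :=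
  connectedIn_of_forall_walk (IsAncestor.refl T u a) fun b hb => by
    obtain ⟨p, hp⟩ := hT.exists_walk_length_eq_dist a b
    exact ⟨p, fun x hx => (IsAncestor.of_mem_support hT hb hp hx).1⟩

theorem exists_deepest_common_ancestor (T : SimpleGraph α) (u a b : α) :
    ∃ y, IsAncestor T u y a ∧ IsAncestor T u y b ∧
      ∀ z, IsAncestor T u z a → IsAncestor T u z b → T.dist u z ≤ T.dist u y := by
  classical
  let P n := ∃ y, IsAncestor T u y a ∧ IsAncestor T u y b ∧ T.dist u y = n
  obtain ⟨y, hya, hyb, hy⟩ : P (Nat.findGreatest P (T.dist u a)) :=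
    Nat.findGreatest_spec (Nat.zero_le _)
      ⟨u, isAncestor_root T u a, isAncestor_root T u b, dist_self⟩
  exact ⟨y, hya, hyb, fun z hza hzb =>
    hy ▸ Nat.le_findGreatest hza.dist_le ⟨z, hza, hzb, rfl⟩⟩

theorem SimpleGraph.IsTree.isAncestor_of_dist_le (hT : T.IsTree) (ha : IsAncestor T u a x)
    (hb : IsAncestor T u b x) (hab : T.dist u a ≤ T.dist u b) : IsAncestor T u a b := by
  obtain ⟨p₁, hp₁⟩ := hT.connected.exists_walk_length_eq_dist u b
  obtain ⟨p₂, hp₂⟩ := hT.connected.exists_walk_length_eq_dist b x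
  obtain ⟨q₁, hq₁⟩ := hT.connected.exists_walk_length_eq_dist u a
  obtain ⟨q₂, hq₂⟩ := hT.connected.exists_walk_length_eq_dist a x
  have hp : (p₁.append p₂).length = T.dist u x := by
    rw [Walk.length_append, hp₁, hp₂]
    exact hb
  have hq : (q₁.append q₂).length = T.dist u x := by
    rw [Walk.length_append, hq₁, hq₂]
    exact ha
  -- both concatenations are geodesics from `u` to `x`, hence the unique path
  have heq : p₁.append p₂ = q₁.append q₂ := (hT.existsUnique_path u x).unique
    (Walk.isPath_of_length_eq_dist _ hp) (Walk.isPath_of_length_eq_dist _ hq)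
  have hmem : a ∈ (p₁.append p₂).support :=
    heq ▸ (Walk.mem_support_append_iff _ _).2 (Or.inl q₁.end_mem_support)
  rcases (Walk.mem_support_append_iff _ _).1 hmem with h | h
  · exact p₁.dist_add_dist_of_mem_support hp₁ h
  · have := p₂.dist_add_dist_of_mem_support hp₂ h
    obtain rfl : b = a := hT.connected.dist_eq_zero_iff.1 (by unfold IsAncestor at *; omega)
    exact IsAncestor.refl T u b

theorem SimpleGraph.IsTree.eq_of_isAncestor_of_dist_eq (hT : T.IsTree)
    (ha : IsAncestor T u a x) (hb : IsAncestor T u b x) (h : T.dist u a = T.dist u b) : a = b :=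
  (hT.isAncestor_of_dist_le ha hb h.le).antisymm hT.connected (hT.isAncestor_of_dist_le hb ha h.ge)

theorem SimpleGraph.IsTree.isAncestor_of_isChild (hT : T.IsTree) (hx : IsChild T u w x)
    (hz : IsAncestor T u z x) (hne : z ≠ x) : IsAncestor T u z w := by
  rcases le_or_gt (T.dist u z) (T.dist u w) with h | h
  · exact hT.isAncestor_of_dist_le hz hx.isAncestor h
  · have := hx.2
    have := hz.dist_le
    exact absurd (hT.eq_of_isAncestor_of_dist_eq hz (IsAncestor.refl T u x) (by omega)) hne

end Ancestors

section Selection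

variable {α : Type*} {T G : SimpleGraph α} {u v w w' x : α}

def touchGraph (T G : SimpleGraph α) (u : α) : SimpleGraph α where
  Adj c c' := c ≠ c' ∧ ∃ a ∈ descendants T u c, ∃ b ∈ descendants T u c', G.Adj a b
  symm := ⟨fun _ _ ⟨hne, a, ha, b, hb, hab⟩ => ⟨hne.symm, b, hb, a, ha, hab.symm⟩⟩
  loopless := ⟨fun _ h => h.1 rfl⟩

theorem touchGraph_cliqueFreeOn_children (hT : T.IsTree) (hTG : T ≤ G) {τ : ℕ}
    (hminor : ¬ HasMinor (completeGraph (Fin (τ + 1))) G) (v : α) :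
    (touchGraph T G u).CliqueFreeOn {c | IsChild T u v c} τ := by
  intro B hB hclique
  have hchild : ∀ c : B, IsChild T u v c := fun c => hB c.2
  have hv : ∀ c : B, v ∉ descendants T u c := fun c hvc => by
    have := (hchild c).2
    have := hvc.dist_le
    omega
  have hcard : Fintype.card (Option B) = τ + 1 := by simp [hclique.card_eq]
  apply hminor
  rw [← hcard]
  refine IsMinorModel.hasMinor_completeGraph_fin
    (X := fun o => o.elim {v} fun c => descendants T u c) ⟨?_, ?_, ?_⟩
  · rintro (_ | c)
    · exact connectedIn_singleton v
    · exact (connectedIn_descendants hT.connected c).mono hTG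
  · rintro (_ | c) (_ | c') hne
    · exact absurd rfl hne
    · exact Set.disjoint_singleton_left.2 (hv c')
    · exact Set.disjoint_singleton_right.2 (hv c)
    · refine Set.disjoint_left.2 fun x hx hx' => hne (congrArg some (Subtype.ext ?_))
      exact hT.eq_of_isAncestor_of_dist_eq hx hx' (by rw [(hchild c).2, (hchild c').2])
  · rintro (_ | c) (_ | c') hadj
    · exact absurd rfl hadj
    · exact ⟨v, rfl, c', IsAncestor.refl T u c', hTG (hchild c').1⟩
    · exact ⟨c, IsAncestor.refl T u c, v, rfl, (hTG (hchild c).1).symm⟩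
    · exact (hclique.isClique c.2 c'.2 (Subtype.coe_injective.ne fun h => hadj (by rw [h]))).2

theorem exists_children_isNIndepSet_touchGraph (hT : T.IsTree) (hTG : T ≤ G) {δ τ : ℕ}
    (hminor : ¬ HasMinor (completeGraph (Fin (τ + 1))) G) (hfin : {c | IsChild T u v c}.Finite)
    (hcard : τ ^ (δ - 1) ≤ {c | IsChild T u v c}.ncard) :
    ∃ B : Finset α, (∀ c ∈ B, IsChild T u v c) ∧ (touchGraph T G u).IsNIndepSet δ B := by
  obtain ⟨B, hB, hind⟩ :=
    (touchGraph T G u).exists_isNIndepSet_of_cliqueFreeOn (A := hfin.toFinset)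
    (by simpa using touchGraph_cliqueFreeOn_children hT hTG hminor v)
    (by rwa [← Set.ncard_eq_toFinset_card _ hfin])
  exact ⟨B, fun c hc => hfin.mem_toFinset.1 (hB hc), hind⟩

def selectedSubtree (T : SimpleGraph α) (u : α) (B : α → Finset α) : Set α :=
  {w | ∀ y x, IsChild T u y x → IsAncestor T u x w → x ∈ B y}

variable {B : α → Finset α}

theorem root_mem_selectedSubtree : u ∈ selectedSubtree T u B := fun y x hyx hxu => by
  have := hyx.2
  simp only [IsAncestor, dist_self] at hxu
  omega

theorem isAncestorClosed_selectedSubtree (hT : T.Connected) :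
    IsAncestorClosed T u (selectedSubtree T u B) :=
  fun _ hw _ hxw y z hyz hzx => hw y z hyz (hzx.trans hT hxw)

theorem SimpleGraph.IsTree.mem_selectedSubtree_iff_of_isChild (hT : T.IsTree)
    (hw : w ∈ selectedSubtree T u B) (hx : IsChild T u w x) :
    x ∈ selectedSubtree T u B ↔ x ∈ B w := by
  refine ⟨fun hxS => hxS w x hx (IsAncestor.refl T u x), fun hxB y z hyz hzx => ?_⟩
  by_cases hzx' : z = x
  · subst hzx'
    obtain rfl : y = w := hT.eq_of_isAncestor_of_dist_eq hyz.isAncestor hx.isAncestor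
      (by have := hyz.2; have := hx.2; omega)
    exact hxB
  · exact hw y z hyz (hT.isAncestor_of_isChild hx hzx hzx')

theorem SimpleGraph.IsTree.ncard_children_selectedSubtree (hT : T.IsTree)
    (hw : w ∈ selectedSubtree T u B) (hB : ∀ x ∈ B w, IsChild T u w x) :
    {x | x ∈ selectedSubtree T u B ∧ IsChild T u w x}.ncard = #(B w) := by
  rw [← Set.ncard_coe_finset]
  congr 1
  ext x
  exact ⟨fun ⟨hxS, hx⟩ => (hT.mem_selectedSubtree_iff_of_isChild hw hx).1 hxS,
    fun hxB => ⟨(hT.mem_selectedSubtree_iff_of_isChild hw (hB x hxB)).2 hxB, hB x hxB⟩⟩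

theorem isAncestor_or_isAncestor_of_adj_of_mem_selectedSubtree (hT : T.Connected) {ρ : ℕ}
    (hρ : ∀ w, T.dist u w ≤ ρ)
    (hB : ∀ y, T.dist u y < ρ → (touchGraph T G u).IsIndepSet (B y))
    (hw : w ∈ selectedSubtree T u B) (hw' : w' ∈ selectedSubtree T u B) (hadj : G.Adj w w') :
    IsAncestor T u w w' ∨ IsAncestor T u w' w := by
  obtain ⟨y, hyw, hyw', hdeepest⟩ := exists_deepest_common_ancestor T u w w'
  by_cases hy : y = w
  · exact .inl (hy ▸ hyw')
  by_cases hy' : y = w'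
  · exact .inr (hy' ▸ hyw)
  obtain ⟨x, hyx, hxw⟩ := hyw.exists_isChild hT hy
  obtain ⟨x', hyx', hxw'⟩ := hyw'.exists_isChild hT hy'
  have hne : x ≠ x' := by
    rintro rfl
    have := hdeepest x hxw hxw'
    have := hyx.2
    omega
  have hdepth : T.dist u y < ρ := by
    have := hyx.2
    have := hxw.dist_le
    have := hρ w
    omega
  exact absurd ⟨hne, w, hxw, w', hxw', hadj⟩
    (hB y hdepth (hw y x hyx hxw) (hw' y x' hyx' hxw') hne)

end Selection

section InducedSubtree

variable {α : Type*} {T : SimpleGraph α} {u : α} {s : Set α}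

theorem exists_induce_walk_of_isAncestor (hT : T.Connected)
    (hs : IsAncestorClosed T u s) {a b : s} (hab : IsAncestor T u a b) :
    ∃ q : (T.induce s).Walk a b, q.length = T.dist a b := by
  obtain ⟨p, hp⟩ := hT.exists_walk_length_eq_dist a b
  have hsupp : ∀ x ∈ p.support, x ∈ s := fun x hx =>
    hs b b.2 x (hab.of_mem_support hT hp hx).2
  exact ⟨p.induce s hsupp, by rw [← hp, ← Walk.length_map, Walk.map_induce]; rfl⟩

theorem dist_induce_of_isAncestor (hT : T.Connected)
    (hs : IsAncestorClosed T u s) {a b : s} (hab : IsAncestor T u a b) :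
    (T.induce s).dist a b = T.dist a b := by
  obtain ⟨q, hq⟩ := exists_induce_walk_of_isAncestor hT hs hab
  refine le_antisymm (hq ▸ dist_le q) ?_
  obtain ⟨q', hq'⟩ := q.reachable.exists_walk_length_eq_dist
  rw [← hq', ← Walk.length_map (Embedding.induce s).toHom]
  exact dist_le _

theorem dist_induce_root (hT : T.Connected) (hu : u ∈ s)
    (hs : IsAncestorClosed T u s) (a : s) :
    (T.induce s).dist ⟨u, hu⟩ a = T.dist u a :=
  dist_induce_of_isAncestor hT hs (isAncestor_root T u a)

theorem IsAncestor.induce (hT : T.Connected) (hu : u ∈ s)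
    (hs : IsAncestorClosed T u s) {a b : s} (hab : IsAncestor T u a b) :
    IsAncestor (T.induce s) ⟨u, hu⟩ a b := by
  rw [IsAncestor, dist_induce_root hT hu hs, dist_induce_root hT hu hs,
    dist_induce_of_isAncestor hT hs hab]
  exact hab

theorem isChild_induce_iff (hT : T.Connected) (hu : u ∈ s)
    (hs : IsAncestorClosed T u s) {a b : s} :
    IsChild (T.induce s) ⟨u, hu⟩ a b ↔ IsChild T u a b := by
  simp only [IsChild, dist_induce_root hT hu hs, induce_adj]

theorem SimpleGraph.IsTree.induce_of_isAncestorClosed (hT : T.IsTree) (hu : u ∈ s)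
    (hs : IsAncestorClosed T u s) : (T.induce s).IsTree where
  connected := (connected_iff_exists_forall_reachable _).2 ⟨⟨u, hu⟩, fun a =>
    (exists_induce_walk_of_isAncestor hT.connected hs (isAncestor_root T u a)).elim
      fun q _ => q.reachable⟩
  isAcyclic := hT.isAcyclic.induce s

theorem SimpleGraph.IsTree.isRootedSubtree_induce (hT : T.IsTree) (hu : u ∈ s)
    (hs : IsAncestorClosed T u s) : IsRootedSubtree T u s ⟨u, hu⟩ :=
  ⟨hT.induce_of_isAncestorClosed hu hs,
    fun _ _ h => (isChild_induce_iff hT.connected hu hs).1 h⟩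

theorem SimpleGraph.IsTree.rootedRegular_induce (hT : T.IsTree) (hu : u ∈ s)
    (hs : IsAncestorClosed T u s) {δ ρ : ℕ} (hdepth : ∀ w, T.dist u w ≤ ρ)
    (hcard : ∀ w ∈ s, T.dist u w < ρ → {x | x ∈ s ∧ IsChild T u w x}.ncard = δ) :
    RootedRegular (T.induce s) ⟨u, hu⟩ δ ρ := by
  refine ⟨hT.induce_of_isAncestorClosed hu hs,
    fun a => (dist_induce_root hT.connected hu hs a).trans_le (hdepth a), fun a ha => ?_⟩
  rw [dist_induce_root hT.connected hu hs] at ha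
  rw [← hcard a a.2 ha, ← Set.ncard_image_of_injective _ Subtype.val_injective]
  congr 1
  ext x
  simp only [Set.mem_image, Set.mem_ofPred_eq, isChild_induce_iff hT.connected hu hs]
  exact ⟨fun ⟨y, hy, hyx⟩ => hyx ▸ ⟨y.2, hy⟩,
    fun ⟨hx, h⟩ => ⟨⟨x, hx⟩, h, rfl⟩⟩

end InducedSubtree

theorem statement11_general {α : Type} [Fintype α] (δ τ : ℕ) (ρ : ℕ)
    (G T : SimpleGraph α) (u : α)
    (hminor : ¬ HasMinor (SimpleGraph.completeGraph (Fin (τ + 1))) G)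
    (Δ : ℕ) (hΔ : τ ^ (δ - 1) ≤ Δ) (hsub : T ≤ G)
    (hreg : RootedRegular T u Δ ρ) :
    ∃ (s : Set α) (hu : u ∈ s),
      IsRootedSubtree T u s ⟨u, hu⟩ ∧
      RootedRegular (T.induce s) ⟨u, hu⟩ δ ρ ∧
      BranchInduced G (fun v : ↥s => (v : α)) (T.induce s) ⟨u, hu⟩ := by
  obtain ⟨hT, hdepth, hchildren⟩ := hreg
  have hselect : ∀ v, T.dist u v < ρ →
      ∃ B : Finset α, (∀ c ∈ B, IsChild T u v c) ∧ (touchGraph T G u).IsNIndepSet δ B :=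
    fun v hv => exists_children_isNIndepSet_touchGraph hT hsub hminor (Set.toFinite _)
      (hchildren v hv ▸ hΔ)
  choose! B hBchild hBindep using hselect
  have hu : u ∈ selectedSubtree T u B := root_mem_selectedSubtree
  have hs : IsAncestorClosed T u (selectedSubtree T u B) :=
    isAncestorClosed_selectedSubtree hT.connected
  refine ⟨selectedSubtree T u B, hu, hT.isRootedSubtree_induce hu hs,
    hT.rootedRegular_induce hu hs hdepth fun w hw hwρ => ?_, fun a b hab _ => ?_⟩
  · rw [hT.ncard_children_selectedSubtree hw (hBchild w hwρ), (hBindep w hwρ).card_eq]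
  · exact (isAncestor_or_isAncestor_of_adj_of_mem_selectedSubtree hT.connected hdepth
      (fun y hy => (hBindep y hy).isIndepSet) a.2 b.2 hab).imp
      (IsAncestor.induce hT.connected hu hs) (IsAncestor.induce hT.connected hu hs)

/-- If `G` has no minor isomorphic to `K_{τ+1}` and `T ≤ G` is a
`(Δ, ρ)`-regular rooted tree with `Δ ≥ τ^{δ−1}`, then some `(δ, ρ)`-regular rooted
subtree of `(T, u)` (with the same root) is branch-induced in `G`. -/
theorem statement11 {α : Type} [Fintype α] (δ τ : ℕ) (hδ : 1 ≤ δ) (hτ : 1 ≤ τ) (ρ : ℕ)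
    (G T : SimpleGraph α) (u : α)
    (hminor : ¬ HasMinor (SimpleGraph.completeGraph (Fin (τ + 1))) G)
    (Δ : ℕ) (hΔ1 : 1 ≤ Δ) (hΔ : τ ^ (δ - 1) ≤ Δ) (hsub : T ≤ G)
    (hreg : RootedRegular T u Δ ρ) :
    ∃ (s : Set α) (hu : u ∈ s),
      IsRootedSubtree T u s ⟨u, hu⟩ ∧
      RootedRegular (T.induce s) ⟨u, hu⟩ δ ρ ∧
      BranchInduced G (fun v : ↥s => (v : α)) (T.induce s) ⟨u, hu⟩ :=
  statement11_general δ τ ρ G T u hminor Δ hΔ hsub hreg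
end
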